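/- Let ⟨Args, att⟩ be an argumentation framework, let E₀ be a complete extension with A ∈ E₀, suppose A is conflict-relevant for B, and suppose no complete extension contains both A and B. If DefBy(A, E₀) ∩ (⋃_{E a complete extension with B ∉ E} NotDef(B, E)) = ∅, then DefBy(A, E₀) = ∅. -/
import Mathlib


namespace AF

variable {Args : Type*}

/-- A set `S` attacks argument `B` if some element of `S` attacks `B`. -/
def SetAttacks (att : Args → Args → Prop) (S : Set Args) (B : Args) : Prop :=
  ∃ C ∈ S, att C B

/-- `S` defends `A` if `S` attacks every attacker of `A`. -/
def Defends (att : Args → Args → Prop) (S : Set Args) (A : Args) : Prop :=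
  ∀ B, att B A → SetAttacks att S B

/-- `S` is conflict-free if no element of `S` attacks an element of `S`. -/
def ConflictFree (att : Args → Args → Prop) (S : Set Args) : Prop :=
  ¬ ∃ C ∈ S, ∃ D ∈ S, att C D

/-- `S` is admissible if it is conflict-free and defends all its elements. -/
def Admissible (att : Args → Args → Prop) (S : Set Args) : Prop :=
  ConflictFree att S ∧ ∀ A ∈ S, Defends att S A

/-- `S` is a complete extension if it is admissible and contains every argument it defends. -/
def IsComplete (att : Args → Args → Prop) (S : Set Args) : Prop :=
  Admissible att S ∧ ∀ A, Defends att S A → A ∈ S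

/-- An attack path from `A` to `B` of length `n`. -/
def AttackPath (att : Args → Args → Prop) (A B : Args) (n : ℕ) : Prop :=
  ∃ C : ℕ → Args, C 0 = A ∧ C n = B ∧ ∀ i < n, att (C i) (C (i + 1))

/-- `A` (in)directly attacks `B`: an attack path of odd length from `A` to `B`. -/
def IndAttacks (att : Args → Args → Prop) (A B : Args) : Prop :=
  ∃ n, Odd n ∧ AttackPath att A B n

/-- `A` (in)directly defends `B`: an attack path of even positive length from `A` to `B`. -/
def IndDefends (att : Args → Args → Prop) (A B : Args) : Prop :=
  ∃ n, 0 < n ∧ Even n ∧ AttackPath att A B n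

/-- `DefBy A E`: the elements of `E` that (in)directly defend `A`. -/
def DefBy (att : Args → Args → Prop) (A : Args) (E : Set Args) : Set Args :=
  {B | B ∈ E ∧ IndDefends att B A}

/-- `NotDef A E`: the (in)direct attackers of `A` that are not attacked by `E`. -/
def NotDef (att : Args → Args → Prop) (A : Args) (E : Set Args) : Set Args :=
  {B | IndAttacks att B A ∧ ¬ SetAttacks att E B}

/-- `A` is conflict-relevant for `B`. -/
def ConflictRelevant (att : Args → Args → Prop) (A B : Args) : Prop :=
  IndAttacks att A B ∧ ¬ att A A

/-- The foil of `A`: its direct attackers. -/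
def Foil (att : Args → Args → Prop) (A : Args) : Set Args :=
  {B | att B A}

end AF

open AF

lemma path_comp {Args : Type*} {att : Args → Args → Prop} {X Y Z : Args} {n m : ℕ}
    (hn : 0 < n) (h1 : AttackPath att X Y n) (h2 : AttackPath att Y Z m) :
    AttackPath att X Z (n + m) := by
  obtain ⟨C, hC0, hCn, hC⟩ := h1
  obtain ⟨D, hD0, hDm, hD⟩ := h2
  refine ⟨fun i => if i < n then C i else D (i - n), ?_, ?_, ?_⟩
  · simp [hn, hC0]
  · simp [hDm, Nat.not_lt.2 (Nat.le_add_right n m)]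
  · intro i hi
    by_cases h1 : i + 1 < n
    · simp [h1, Nat.lt_of_succ_lt h1, hC i (Nat.lt_of_succ_lt h1)]
    · by_cases h2 : i < n
      · have hin : i + 1 = n := by omega
        simp only []
        rw [if_pos h2, if_neg h1]
        have h0 : i + 1 - n = 0 := by omega
        rw [h0, hD0, ← hCn, ← hin]
        exact hC i h2
      · have hni : n ≤ i := Nat.not_lt.1 h2
        simp only [h2, if_neg, h1, if_neg]
        have : i + 1 - n = (i - n) + 1 := by omega
        rw [this]
        exact hD (i - n) (by omega)

theorem stmt12 {Args : Type*} (att : Args → Args → Prop) (E₀ : Set Args)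
    (hE₀ : IsComplete att E₀) (A B : Args) (hA : A ∈ E₀)
    (hrel : ConflictRelevant att A B)
    (hsep : ∀ E : Set Args, IsComplete att E → ¬ (A ∈ E ∧ B ∈ E))
    (h : DefBy att A E₀ ∩
         (⋃ E ∈ {E : Set Args | IsComplete att E ∧ B ∉ E}, NotDef att B E) = ∅) :
    DefBy att A E₀ = ∅ := by
  ext C
  simp only [Set.mem_empty_iff_false, iff_false]
  intro hC
  have hCempty := Set.eq_empty_iff_forall_notMem.1 h C
  apply hCempty
  refine ⟨hC, ?_⟩
  obtain ⟨hCE, n, hnpos, hneven, hpath⟩ := hC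
  obtain ⟨hAatt, _⟩ := hrel
  obtain ⟨m, hmodd, hpath2⟩ := hAatt
  have hBnot : B ∉ E₀ := fun hB => hsep E₀ hE₀ ⟨hA, hB⟩
  simp only [Set.mem_iUnion]
  refine ⟨E₀, ⟨hE₀, hBnot⟩, ?_, ?_⟩
  · exact ⟨n + m, hneven.add_odd hmodd, path_comp hnpos hpath hpath2⟩
  · intro ⟨D, hD, hDC⟩
    exact hE₀.1.1 ⟨D, hD, C, hCE, hDC⟩
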